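/- Let T be a well-founded increasing tree on ℕ and define T(ℤ) = {Σ_{i∈E} aᵢeᵢ : aᵢ ∈ ℤ, E ∈ T} ⊆ c₀, where (eᵢ) is the unit vector basis of c₀. Then there does not exist a coarse embedding from c₀ into the metric space T(ℤ) equipped with the sup metric. -/

import Mathlib

open Filter ZeroAtInfty

/-- `c₀`, the space of real sequences vanishing at infinity, with the sup norm. -/
abbrev czero := ZeroAtInftyContinuousMap ℕ ℝ

/-- Coarse embedding between (pseudo)metric spaces. -/
def CoarseEmbeddingOn {X Y : Type*} [PseudoMetricSpace X] [PseudoMetricSpace Y]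
    (φ : X → Y) : Prop :=
  ∃ ρ ω : ℝ → ℝ, Monotone ρ ∧ Monotone ω ∧ Tendsto ρ atTop atTop ∧
    ∀ x₁ x₂ : X, ρ (dist x₁ x₂) ≤ dist (φ x₁) (φ x₂) ∧ dist (φ x₁) (φ x₂) ≤ ω (dist x₁ x₂)

/-- For a well-founded increasing tree `T` on ℕ, the subset
`T(ℤ) = {Σ_{i∈E} aᵢeᵢ : aᵢ ∈ ℤ, E ∈ T}` of `c₀`: integer-valued sequences whose support
is contained in (the range of) some node of `T`. -/
def treeZ (T : Set (List ℕ)) : Set czero :=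
  {x | (∀ i : ℕ, ∃ z : ℤ, x i = (z : ℝ)) ∧ ∃ l ∈ T, ∀ i : ℕ, x i ≠ 0 → i ∈ l}

open Classical in
noncomputable def ulim (U : Ultrafilter ℕ) {α : Type*} (f : ℕ → α) : α :=
  if h : ∃ v, {n | f n = v} ∈ U then h.choose else f 0

lemma ulim_eq (U : Ultrafilter ℕ) {α : Type*} {f : ℕ → α} {v : α}
    (hv : {n | f n = v} ∈ U) : ulim U f = v := by
  have h : ∃ v, {n | f n = v} ∈ U := ⟨v, hv⟩
  classical
  rw [ulim]
  rw [dif_pos h]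
  have h2 := h.choose_spec
  obtain ⟨n, hn1, hn2⟩ := Filter.nonempty_of_mem (Filter.inter_mem h2 hv)
  exact hn1.symm.trans hn2

lemma ulim_spec (U : Ultrafilter ℕ) {α : Type*} {f : ℕ → α}
    (h : ∃ v, {n | f n = v} ∈ U) : {n | f n = ulim U f} ∈ U := by
  obtain ⟨v, hv⟩ := h
  rwa [ulim_eq U hv]

lemma exists_ulim_of_finite (U : Ultrafilter ℕ) {α : Type*} {f : ℕ → α}
    (h : (Set.range f).Finite) : ∃ v, {n | f n = v} ∈ U := by
  have key : ∀ S : Set α, S.Finite → {n | f n ∈ S} ∈ U → ∃ v, {n | f n = v} ∈ U := by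
    intro S hS
    refine Set.Finite.induction_on (motive := fun S _ => {n | f n ∈ S} ∈ U → ∃ v, {n | f n = v} ∈ U)
      S hS ?_ ?_
    · intro h; simp only [Set.mem_empty_iff_false, Set.setOf_false] at h
      exact absurd h (Filter.empty_notMem (U : Filter ℕ))
    · intro a S' _ _ ih hmem
      have : {n | f n = a} ∪ {n | f n ∈ S'} ∈ U := by
        apply Filter.mem_of_superset hmem
        intro n hn
        rcases hn with h1 | h2
        · exact Or.inl h1
        · exact Or.inr h2
      rcases Ultrafilter.union_mem_iff.mp this with h1 | h2
      · exact ⟨a, h1⟩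
      · exact ih h2
  refine key _ h ?_
  have : {n | f n ∈ Set.range f} = Set.univ := by ext n; simp
  rw [this]; exact Filter.univ_mem

lemma exists_ulim_int_bdd (U : Ultrafilter ℕ) {f : ℕ → ℝ} {M : ℝ}
    (hint : ∀ n, ∃ z : ℤ, f n = (z : ℝ)) (hbd : ∀ n, |f n| ≤ M) :
    ∃ v, {n | f n = v} ∈ U := by
  apply exists_ulim_of_finite
  have : Set.range f ⊆ (fun z : ℤ => (z : ℝ)) '' (Set.Icc ⌈-M⌉ ⌊M⌋) := by
    rintro x ⟨n, rfl⟩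
    obtain ⟨z, hz⟩ := hint n
    refine ⟨z, ⟨?_, ?_⟩, hz.symm⟩
    · rw [Int.ceil_le]; push_cast; rw [← hz]; linarith [(abs_le.mp (hbd n)).1]
    · rw [Int.le_floor]; push_cast; rw [← hz]; exact (abs_le.mp (hbd n)).2
  exact ((Set.finite_Icc _ _).image _).subset this

/-- In a strictly sorted list, an element `≤ N` belongs to `takeWhile (· ≤ N)`. -/
lemma mem_takeWhile_of_sorted {l : List ℕ} (hl : l.Pairwise (· < ·)) {a N : ℕ}
    (ha : a ∈ l) (haN : a ≤ N) : a ∈ l.takeWhile (fun m => m ≤ N) := by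
  induction l with
  | nil => simp at ha
  | cons b t ih =>
    have hbt : ∀ x ∈ t, b < x := fun x hx => List.rel_of_pairwise_cons hl hx
    rcases List.mem_cons.mp ha with rfl | hat
    · rw [List.takeWhile_cons_of_pos (by simpa using haN)]
      exact List.mem_cons_self
    · have hb : b ≤ N := le_of_lt (lt_of_lt_of_le (hbt a hat) haN)
      rw [List.takeWhile_cons_of_pos (by simpa using hb)]
      exact List.mem_cons_of_mem _ (ih (List.Pairwise.of_cons hl) hat)

/-- In a strictly sorted list containing values `i 0 < i 1 < ⋯ < i p`,
the length exceeds `p` and the `p`-th entry is at most `i p`. -/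
lemma sorted_get_le {l : List ℕ} (hl : l.Pairwise (· < ·)) {i : ℕ → ℕ}
    (hmono : StrictMono i) {p : ℕ} (hmem : ∀ j ≤ p, i j ∈ l) :
    p < l.length ∧ ∀ hp : p < l.length, l.get ⟨p, hp⟩ ≤ i p := by
  have hget : ∀ u v : Fin l.length, u < v → l.get u < l.get v :=
    fun u v huv => List.pairwise_iff_get.mp hl u v huv
  have hgetm : ∀ u v : Fin l.length, u ≤ v → l.get u ≤ l.get v := by
    intro u v huv
    rcases eq_or_lt_of_le huv with h | h
    · exact le_of_eq (congrArg l.get (Fin.ext (congrArg Fin.val h)))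
    · exact le_of_lt (hget u v h)
  -- index function
  have hidx : ∀ j, j ≤ p → ∃ u : Fin l.length, l.get u = i j := by
    intro j hj
    exact List.mem_iff_get.mp (hmem j hj)
  choose q hq using hidx
  have hqmono : ∀ j hj j' hj', j < j' → q j hj < q j' hj' := by
    intro j hj j' hj' hjj
    by_contra hcon
    push_neg at hcon
    have := hgetm _ _ hcon
    rw [hq, hq] at this
    exact absurd (hmono hjj) (not_lt.mpr this)
  have hqge : ∀ j (hj : j ≤ p), j ≤ (q j hj : ℕ) := by
    intro j
    induction j with
    | zero => intro hj; exact Nat.zero_le _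
    | succ m ihm =>
      intro hj
      have h1 : m ≤ p := le_trans (Nat.le_succ m) hj
      have h2 := hqmono m h1 (m+1) hj (Nat.lt_succ_self m)
      have h3 := ihm h1
      omega
  have hple : p ≤ (q p le_rfl : ℕ) := hqge p le_rfl
  have hlen : p < l.length := lt_of_le_of_lt hple (q p le_rfl).isLt
  refine ⟨hlen, fun hp => ?_⟩
  have : l.get ⟨p, hp⟩ ≤ l.get (q p le_rfl) := hgetm _ _ (by exact hple)
  rwa [hq p le_rfl] at this

lemma ulim_support (T : Set (List ℕ))
    (hclosed : ∀ l ∈ T, ∀ l' : List ℕ, l' <+: l → l' ∈ T)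
    (hinc : ∀ l ∈ T, l.Chain' (· < ·))
    (hwf : ¬ ∃ x : ℕ → ℕ, ∀ n : ℕ, (List.ofFn fun i : Fin n => x i) ∈ T)
    (U : Ultrafilter ℕ) (hU : (U : Filter ℕ) ≤ cofinite)
    (x : ℕ → ℕ → ℝ) (M : ℝ)
    (hint : ∀ n i, ∃ z : ℤ, x n i = (z : ℝ))
    (hbd : ∀ n i, |x n i| ≤ M)
    (hsupp : ∀ n, ∃ l ∈ T, ∀ i, x n i ≠ 0 → i ∈ l) :
    ∃ l ∈ T, ∀ i, ulim U (fun n => x n i) ≠ 0 → i ∈ l := by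
  classical
  set y : ℕ → ℝ := fun i => ulim U (fun n => x n i) with hy
  have hyspec : ∀ i, {n | x n i = y i} ∈ U := fun i =>
    ulim_spec U (exists_ulim_int_bdd U (fun n => hint n i) (fun n => hbd n i))
  by_cases hfin : {i | y i ≠ 0}.Finite
  · -- finite support: find a common witness
    have hE : (⋂ i ∈ hfin.toFinset, {n | x n i = y i}) ∈ U :=
      (Filter.biInter_mem hfin.toFinset.finite_toSet).mpr (fun i _ => hyspec i)
    obtain ⟨n, hn⟩ := Filter.nonempty_of_mem hE
    obtain ⟨l, hlT, hls⟩ := hsupp n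
    refine ⟨l, hlT, fun i hyi => ?_⟩
    have hiF : i ∈ hfin.toFinset := hfin.mem_toFinset.mpr hyi
    have hxn : x n i = y i := by
      have := Set.mem_iInter₂.mp hn i hiF
      exact this
    exact hls i (by rw [hxn]; exact hyi)
  · -- infinite support: build an infinite branch, contradiction
    exfalso
    have hinf : {i | y i ≠ 0}.Infinite := hfin
    set i : ℕ → ℕ := Nat.nth (fun m => y m ≠ 0) with hi
    have himono : StrictMono i := Nat.nth_strictMono hinf
    have himem : ∀ r, y (i r) ≠ 0 := fun r => Nat.nth_mem_of_infinite hinf r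
    -- for each r, a common witness n with agreement on i 0 .. i r
    have hEr : ∀ r : ℕ, (⋂ j ∈ Finset.range (r+1), {n | x n (i j) = y (i j)}) ∈ U :=
      fun r => (Filter.biInter_mem (Finset.range (r+1)).finite_toSet).mpr
        (fun j _ => hyspec (i j))
    have hner : ∀ r : ℕ, ∃ n, ∀ j ≤ r, x n (i j) = y (i j) := by
      intro r
      obtain ⟨n, hn⟩ := Filter.nonempty_of_mem (hEr r)
      exact ⟨n, fun j hj => Set.mem_iInter₂.mp hn j (Finset.mem_range.mpr (by omega))⟩
    choose nr hnr using hner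
    -- the node for x (nr r), truncated at i r
    have hnode : ∀ r : ℕ, ∃ l ∈ T, ∀ j, x (nr r) j ≠ 0 → j ∈ l := fun r => hsupp (nr r)
    choose lr hlrT hlrs using hnode
    set s : ℕ → List ℕ := fun r => (lr r).takeWhile (fun m => m ≤ i r) with hs
    have hsT : ∀ r, s r ∈ T := fun r =>
      hclosed (lr r) (hlrT r) (s r) (List.takeWhile_prefix _)
    have hspw : ∀ r, (s r).Pairwise (· < ·) := fun r =>
      (List.isChain_iff_pairwise.mp (hinc (lr r) (hlrT r))).sublist (List.takeWhile_sublist _)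
    have hsmem : ∀ r, ∀ j ≤ r, i j ∈ s r := by
      intro r j hj
      have h1 : x (nr r) (i j) ≠ 0 := by rw [hnr r j hj]; exact himem j
      exact mem_takeWhile_of_sorted
        (List.isChain_iff_pairwise.mp (hinc (lr r) (hlrT r)))
        (hlrs r (i j) h1) (himono.monotone hj)
    have hsle : ∀ r, ∀ m ∈ s r, m ≤ i r := by
      intro r m hm
      simpa using List.mem_takeWhile_imp hm
    have hslen : ∀ r, r < (s r).length := fun r => (sorted_get_le (hspw r) himono
      (fun j hj => hsmem r j hj)).1
    -- entries of s r are bounded: getD p ≤ i p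
    have hgetDle : ∀ r p, (s r).getD p 0 ≤ i p := by
      intro r p
      by_cases hp : p < (s r).length
      · rw [List.getD_eq_getElem _ _ hp]
        rcases le_or_gt p r with hpr | hrp
        · have := (sorted_get_le (hspw r) himono
            (fun j hj => hsmem r j (le_trans hj hpr))).2 hp
          simpa [List.get_eq_getElem] using this
        · have hmem : (s r)[p] ∈ s r := List.getElem_mem hp
          exact le_trans (hsle r _ hmem) (le_of_lt (himono hrp))
      · rw [List.getD_eq_default _ _ (not_lt.mp hp)]
        exact Nat.zero_le _
    -- the branch
    set b : ℕ → ℕ := fun p => ulim U (fun r => (s r).getD p 0) with hb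
    have hbspec : ∀ p, {r | (s r).getD p 0 = b p} ∈ U := by
      intro p
      apply ulim_spec
      apply exists_ulim_of_finite
      apply (Set.finite_Iic (i p)).subset
      rintro v ⟨r, rfl⟩
      exact hgetDle r p
    apply hwf
    refine ⟨b, fun n => ?_⟩
    have hEn : ((⋂ p ∈ Finset.range n, {r | (s r).getD p 0 = b p}) ∩ {r | n ≤ r}) ∈ U := by
      apply Filter.inter_mem
      · exact (Filter.biInter_mem (Finset.range n).finite_toSet).mpr (fun p _ => hbspec p)
      · apply hU
        rw [Filter.mem_cofinite]
        apply (Set.finite_Iio n).subset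
        intro r hr; simpa using hr
    obtain ⟨r, hr1, hr2⟩ := Filter.nonempty_of_mem hEn
    have hrge : n ≤ r := hr2
    have hlen : n ≤ (s r).length := le_trans (by omega) (hslen r)
    have heq : (List.ofFn fun t : Fin n => b t) = (s r).take n := by
      apply List.ext_getElem
      · simp [hlen]
      · intro t h1 h2
        have ht : t < n := by simpa using h1
        have htl : t < (s r).length := lt_of_lt_of_le ht hlen
        have hgd : (s r).getD t 0 = b t :=
          Set.mem_iInter₂.mp hr1 t (Finset.mem_range.mpr ht)
        rw [List.getElem_ofFn, List.getElem_take]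
        rw [← hgd, List.getD_eq_getElem _ _ htl]
    rw [heq]
    exact hclosed (s r) (hsT r) _ (List.take_prefix n (s r))

/-- The test configuration: `cfg k a` has `i`-th coordinate `#{j < k | i ≤ a j}`. -/
noncomputable def cfg (k : ℕ) (a : ℕ → ℕ) : czero :=
  ⟨⟨fun i => ((Finset.univ.filter (fun j : Fin k => i ≤ a j)).card : ℝ),
    continuous_of_discreteTopology⟩, by
    rw [cocompact_eq_cofinite, Nat.cofinite_eq_atTop]
    apply tendsto_const_nhds.congr'
    filter_upwards [eventually_ge_atTop ((Finset.univ.sup fun j : Fin k => a j) + 1)] with i hi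
    have : (Finset.univ.filter (fun j : Fin k => i ≤ a j)) = ∅ := by
      rw [Finset.filter_eq_empty_iff]
      intro j _
      have : a j ≤ Finset.univ.sup fun j : Fin k => a j := Finset.le_sup (f := fun j : Fin k => a j) (Finset.mem_univ j)
      omega
    simp [this]⟩

lemma cfg_apply (k : ℕ) (a : ℕ → ℕ) (i : ℕ) :
    cfg k a i = ((Finset.univ.filter (fun j : Fin k => i ≤ a j)).card : ℝ) := rfl

lemma czero_coord_le_dist (x y : czero) (i : ℕ) : |x i - y i| ≤ dist x y := by
  rw [← ZeroAtInftyContinuousMap.dist_toBCF_eq_dist]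
  have h := BoundedContinuousFunction.dist_coe_le_dist (f := x.toBCF) (g := y.toBCF) i
  simpa [Real.dist_eq] using h

lemma czero_dist_le {C : ℝ} (hC : 0 ≤ C) (x y : czero) (h : ∀ i, |x i - y i| ≤ C) :
    dist x y ≤ C := by
  rw [← ZeroAtInftyContinuousMap.dist_toBCF_eq_dist]
  refine (BoundedContinuousFunction.dist_le hC).mpr fun i => ?_
  simpa [Real.dist_eq] using h i

/-- If two tuples differ only at position `s`, the configurations are at distance ≤ 1. -/
lemma cfg_dist_le_one (k : ℕ) (a b : ℕ → ℕ) (s : ℕ) (hab : ∀ t, t ≠ s → a t = b t) :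
    dist (cfg k a) (cfg k b) ≤ 1 := by
  apply czero_dist_le zero_le_one
  intro i
  rw [cfg_apply, cfg_apply]
  set S := Finset.univ.filter (fun j : Fin k => i ≤ a j) with hS
  set S' := Finset.univ.filter (fun j : Fin k => i ≤ b j) with hS'
  by_cases hsk : s < k
  · set s' : Fin k := ⟨s, hsk⟩
    have herase : S.erase s' = S'.erase s' := by
      ext j
      simp only [Finset.mem_erase, hS, hS', Finset.mem_filter, Finset.mem_univ, true_and]
      constructor
      · rintro ⟨hj, hij⟩
        refine ⟨hj, ?_⟩
        rwa [← hab j (fun hc => hj (Fin.ext hc))]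
      · rintro ⟨hj, hij⟩
        refine ⟨hj, ?_⟩
        rwa [hab j (fun hc => hj (Fin.ext hc))]
    have h1 : S.card ≤ S'.card + 1 := by
      have hsub : S ⊆ insert s' (S'.erase s') := by
        rw [Finset.subset_insert_iff, herase.symm]
      calc S.card ≤ (insert s' (S'.erase s')).card := Finset.card_le_card hsub
        _ ≤ (S'.erase s').card + 1 := Finset.card_insert_le _ _
        _ ≤ S'.card + 1 := by
            have := Finset.card_erase_le (a := s') (s := S'); omega
    have h2 : S'.card ≤ S.card + 1 := by
      have hsub : S' ⊆ insert s' (S.erase s') := by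
        rw [Finset.subset_insert_iff, herase]
      calc S'.card ≤ (insert s' (S.erase s')).card := Finset.card_le_card hsub
        _ ≤ (S.erase s').card + 1 := Finset.card_insert_le _ _
        _ ≤ S.card + 1 := by
            have := Finset.card_erase_le (a := s') (s := S); omega
    rw [abs_sub_le_iff]
    constructor
    · have : (S.card : ℝ) ≤ S'.card + 1 := by exact_mod_cast h1
      linarith
    · have : (S'.card : ℝ) ≤ S.card + 1 := by exact_mod_cast h2
      linarith
  · have : S = S' := by
      ext j
      simp only [hS, hS', Finset.mem_filter, Finset.mem_univ, true_and]
      rw [hab j (by omega : (j : ℕ) ≠ s)]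
    rw [this, sub_self, abs_zero]
    exact zero_le_one

lemma cfg_dist_le_k (k : ℕ) (a b : ℕ → ℕ) : dist (cfg k a) (cfg k b) ≤ k := by
  apply czero_dist_le (by positivity)
  intro i
  rw [cfg_apply, cfg_apply, abs_sub_le_iff]
  have h1 : (Finset.univ.filter (fun j : Fin k => i ≤ a j)).card ≤ k := by
    simpa using Finset.card_filter_le Finset.univ (fun j : Fin k => i ≤ a j)
  have h2 : (Finset.univ.filter (fun j : Fin k => i ≤ b j)).card ≤ k := by
    simpa using Finset.card_filter_le Finset.univ (fun j : Fin k => i ≤ b j)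
  constructor
  · have : ((Finset.univ.filter (fun j : Fin k => i ≤ a j)).card : ℝ) ≤ k := by exact_mod_cast h1
    have h0 : (0:ℝ) ≤ (Finset.univ.filter (fun j : Fin k => i ≤ b j)).card := by positivity
    linarith
  · have : ((Finset.univ.filter (fun j : Fin k => i ≤ b j)).card : ℝ) ≤ k := by exact_mod_cast h2
    have h0 : (0:ℝ) ≤ (Finset.univ.filter (fun j : Fin k => i ≤ a j)).card := by positivity
    linarith

lemma cfg_dist_ge (k : ℕ) (a b : ℕ → ℕ) (m : ℕ) (ha : ∀ t < k, a t < m)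
    (hb : ∀ t < k, m ≤ b t) : (k : ℝ) ≤ dist (cfg k a) (cfg k b) := by
  have h := czero_coord_le_dist (cfg k a) (cfg k b) m
  rw [cfg_apply, cfg_apply] at h
  have h1 : (Finset.univ.filter (fun j : Fin k => m ≤ a j)) = ∅ := by
    rw [Finset.filter_eq_empty_iff]
    intro j _
    have := ha j j.isLt
    omega
  have h2 : (Finset.univ.filter (fun j : Fin k => m ≤ b j)) = Finset.univ := by
    rw [Finset.filter_eq_self]
    intro j _
    exact hb j j.isLt
  rw [h1, h2] at h
  simpa using h

/-- Iterated ultrafilter limits: `hiter U k g d a` replaces, one at a time, the entries of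
`a` at positions `k-1, k-2, ..., k-d` by ultrafilter limits. -/
noncomputable def hiter (U : Ultrafilter ℕ) (k : ℕ) (g : (ℕ → ℕ) → ℕ → ℝ) :
    ℕ → (ℕ → ℕ) → ℕ → ℝ
  | 0 => g
  | d+1 => fun a i => ulim U (fun n => hiter U k g d (Function.update a (k - (d+1)) n) i)

lemma hiter_succ (U : Ultrafilter ℕ) (k : ℕ) (g : (ℕ → ℕ) → ℕ → ℝ) (d : ℕ)
    (a : ℕ → ℕ) (i : ℕ) :
    hiter U k g (d+1) a i = ulim U (fun n => hiter U k g d (Function.update a (k - (d+1)) n) i)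
  := rfl

section Master

variable (T : Set (List ℕ)) (U : Ultrafilter ℕ) (g : (ℕ → ℕ) → ℕ → ℝ) (M c : ℝ) (k : ℕ)

/-- The master invariant for the iterated limits. -/
def Master (d : ℕ) : Prop :=
  ∀ a : ℕ → ℕ,
    (∀ i, ∃ z : ℤ, hiter U k g d a i = (z : ℝ)) ∧
    (∀ i, |hiter U k g d a i| ≤ M) ∧
    (∃ l ∈ T, ∀ i, hiter U k g d a i ≠ 0 → i ∈ l) ∧
    (∀ b : ℕ → ℕ, ∀ s : ℕ, (∀ t, t ≠ s → a t = b t) →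
      ∀ i, |hiter U k g d a i - hiter U k g d b i| ≤ c) ∧
    (∀ b : ℕ → ℕ, (∀ t, t < k - d → a t = b t) → hiter U k g d a = hiter U k g d b)

theorem master_holds
    (hclosed : ∀ l ∈ T, ∀ l' : List ℕ, l' <+: l → l' ∈ T)
    (hinc : ∀ l ∈ T, l.Chain' (· < ·))
    (hwf : ¬ ∃ x : ℕ → ℕ, ∀ n : ℕ, (List.ofFn fun i : Fin n => x i) ∈ T)
    (hU : (U : Filter ℕ) ≤ cofinite)
    (hg1 : ∀ a i, ∃ z : ℤ, g a i = (z : ℝ))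
    (hg2 : ∀ a i, |g a i| ≤ M)
    (hg3 : ∀ a, ∃ l ∈ T, ∀ i, g a i ≠ 0 → i ∈ l)
    (hgLip : ∀ a b : ℕ → ℕ, ∀ s : ℕ, (∀ t, t ≠ s → a t = b t) → ∀ i, |g a i - g b i| ≤ c)
    (hgdep : ∀ a b : ℕ → ℕ, (∀ t, t < k → a t = b t) → g a = g b) :
    ∀ d, d ≤ k → Master T U g M c k d := by
  intro d
  induction d with
  | zero =>
    intro _ a
    exact ⟨hg1 a, hg2 a, hg3 a, fun b s hab i => hgLip a b s hab i,
      fun b hab => hgdep a b (by simpa using hab)⟩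
  | succ d ih =>
    intro hdk
    have hd : d ≤ k := by omega
    have IH := ih hd
    intro a
    set P := k - (d+1) with hP
    -- existence of the ultrafilter limits
    have hex : ∀ (a' : ℕ → ℕ) (i : ℕ),
        ∃ v, {n | hiter U k g d (Function.update a' P n) i = v} ∈ U := by
      intro a' i
      exact exists_ulim_int_bdd U (fun n => (IH _).1 i) (fun n => (IH _).2.1 i)
    have hspec : ∀ (a' : ℕ → ℕ) (i : ℕ),
        {n | hiter U k g d (Function.update a' P n) i = hiter U k g (d+1) a' i} ∈ U := by
      intro a' i
      rw [hiter_succ]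
      exact ulim_spec U (hex a' i)
    refine ⟨?_, ?_, ?_, ?_, ?_⟩
    · intro i
      obtain ⟨n, hn⟩ := Filter.nonempty_of_mem (hspec a i)
      rw [← hn]
      exact (IH _).1 i
    · intro i
      obtain ⟨n, hn⟩ := Filter.nonempty_of_mem (hspec a i)
      rw [← hn]
      exact (IH _).2.1 i
    · have := ulim_support T hclosed hinc hwf U hU
        (fun n j => hiter U k g d (Function.update a P n) j) M
        (fun n j => (IH _).1 j) (fun n j => (IH _).2.1 j)
        (fun n => (IH _).2.2.1)
      obtain ⟨l, hlT, hl⟩ := this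
      exact ⟨l, hlT, fun i hi => hl i (by rw [hiter_succ] at hi; exact hi)⟩
    · intro b s hab i
      obtain ⟨n, hn1, hn2⟩ := Filter.nonempty_of_mem
        (Filter.inter_mem (hspec a i) (hspec b i))
      have hn1 : hiter U k g d (Function.update a P n) i = hiter U k g (d+1) a i := hn1
      have hn2 : hiter U k g d (Function.update b P n) i = hiter U k g (d+1) b i := hn2
      rw [← hn1, ← hn2]
      by_cases hsP : s = P
      · have : Function.update a P n = Function.update b P n := by
          funext t
          by_cases htP : t = P
          · subst htP; simp
          · rw [Function.update_of_ne htP, Function.update_of_ne htP]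
            exact hab t (by rw [hsP]; exact htP)
        rw [this, sub_self, abs_zero]
        -- 0 ≤ c
        have h0 := hgLip a a s (fun t _ => rfl) 0
        rw [sub_self, abs_zero] at h0
        exact h0
      · exact (IH _).2.2.2.1 _ s (by
          intro t hts
          by_cases htP : t = P
          · subst htP; simp
          · rw [Function.update_of_ne htP, Function.update_of_ne htP]
            exact hab t hts) i
    · intro b hab
      funext i
      rw [hiter_succ, hiter_succ]
      congr 1
      funext n
      have := (IH (Function.update a P n)).2.2.2.2 (Function.update b P n) (by
        intro t ht
        by_cases htP : t = P
        · subst htP; simp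
        · rw [Function.update_of_ne htP, Function.update_of_ne htP]
          exact hab t (by omega))
      rw [this]

end Master

section Greedy

variable (T : Set (List ℕ)) (U : Ultrafilter ℕ) (g : (ℕ → ℕ) → ℕ → ℝ) (M c : ℝ) (k : ℕ)

open Classical in
noncomputable def nodeOf (f : ℕ → ℝ) : List ℕ :=
  if h : ∃ l ∈ T, ∀ i, f i ≠ 0 → i ∈ l then h.choose else []

lemma nodeOf_spec {f : ℕ → ℝ} (h : ∃ l ∈ T, ∀ i, f i ≠ 0 → i ∈ l) :
    nodeOf T f ∈ T ∧ ∀ i, f i ≠ 0 → i ∈ nodeOf T f := by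
  classical
  rw [nodeOf]
  rw [dif_pos h]
  exact ⟨h.choose_spec.1, h.choose_spec.2⟩

noncomputable def Fst (j : ℕ) (a : ℕ → ℕ) : Finset ℕ :=
  (Finset.range (j+1)).biUnion (fun t => (nodeOf T (hiter U k g (k-t) a)).toFinset)

open Classical in
noncomputable def pickF (B0 j : ℕ) (a : ℕ → ℕ) : ℕ :=
  if h : {n | B0 ≤ n ∧ ∀ i ∈ Fst T U g k j a,
      hiter U k g (k-j-1) (Function.update a j n) i = hiter U k g (k-j) a i}.Nonempty
  then h.choose else 0

noncomputable def greedy (B0 : ℕ) : ℕ → (ℕ → ℕ)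
  | 0 => fun _ => 0
  | j+1 => Function.update (greedy B0 j) j (pickF T U g k B0 j (greedy B0 j))

variable {T U g M c k}

lemma hit_rewrite {j : ℕ} (hj : j < k) (a : ℕ → ℕ) (i : ℕ) :
    hiter U k g (k-j) a i = ulim U (fun n => hiter U k g (k-j-1) (Function.update a j n) i) := by
  have e : k - j = (k-j-1)+1 := by omega
  have e2 : k - ((k-j-1)+1) = j := by omega
  calc hiter U k g (k-j) a i = hiter U k g ((k-j-1)+1) a i := by rw [← e]
    _ = ulim U (fun n => hiter U k g (k-j-1) (Function.update a (k - ((k-j-1)+1)) n) i) :=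
        hiter_succ U k g _ a i
    _ = ulim U (fun n => hiter U k g (k-j-1) (Function.update a j n) i) := by rw [e2]

lemma greedy_stable (B0 : ℕ) : ∀ j j', j ≤ j' → ∀ t, t < j →
    greedy T U g k B0 j' t = greedy T U g k B0 j t := by
  intro j j' hjj
  induction j', hjj using Nat.le_induction with
  | base => intro t _; rfl
  | succ j' hjj ih =>
    intro t ht
    show Function.update (greedy T U g k B0 j') j' _ t = _
    rw [Function.update_of_ne (by omega)]
    exact ih t ht

lemma pick_spec (hU : (U : Filter ℕ) ≤ cofinite) (hM : ∀ d, d ≤ k → Master T U g M c k d)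
    (B0 : ℕ) {j : ℕ} (hj : j < k) :
    B0 ≤ pickF T U g k B0 j (greedy T U g k B0 j) ∧
    ∀ i ∈ Fst T U g k j (greedy T U g k B0 j),
      hiter U k g (k-j-1)
        (Function.update (greedy T U g k B0 j) j (pickF T U g k B0 j (greedy T U g k B0 j))) i
        = hiter U k g (k-j) (greedy T U g k B0 j) i := by
  classical
  set a := greedy T U g k B0 j with ha
  have hexU : {n | B0 ≤ n ∧ ∀ i ∈ Fst T U g k j a,
      hiter U k g (k-j-1) (Function.update a j n) i = hiter U k g (k-j) a i} ∈ U := by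
    have h1 : {n | B0 ≤ n} ∈ U := by
      apply hU
      rw [Filter.mem_cofinite]
      apply (Set.finite_Iio B0).subset
      intro r hr; simpa using hr
    have h2 : (⋂ i ∈ Fst T U g k j a, {n |
        hiter U k g (k-j-1) (Function.update a j n) i = hiter U k g (k-j) a i}) ∈ U := by
      refine (Filter.biInter_mem (Fst T U g k j a).finite_toSet).mpr (fun i _ => ?_)
      have : hiter U k g (k-j) a i
          = ulim U (fun n => hiter U k g (k-j-1) (Function.update a j n) i) :=
        hit_rewrite hj a i
      rw [this]
      exact ulim_spec U (exists_ulim_int_bdd U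
        (fun n => (hM (k-j-1) (by omega) _).1 i) (fun n => (hM (k-j-1) (by omega) _).2.1 i))
    have := Filter.inter_mem h1 h2
    apply Filter.mem_of_superset this
    rintro n ⟨hn1, hn2⟩
    exact ⟨hn1, fun i hi => Set.mem_iInter₂.mp hn2 i hi⟩
  have hne : {n | B0 ≤ n ∧ ∀ i ∈ Fst T U g k j a,
      hiter U k g (k-j-1) (Function.update a j n) i = hiter U k g (k-j) a i}.Nonempty :=
    Filter.nonempty_of_mem hexU
  have : pickF T U g k B0 j a = hne.choose := by
    rw [pickF, dif_pos hne]
  rw [this]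
  exact hne.choose_spec

lemma greedy_step_bound (hU : (U : Filter ℕ) ≤ cofinite)
    (hM : ∀ d, d ≤ k → Master T U g M c k d) (B0 : ℕ) {j : ℕ} (hj : j < k) (i : ℕ) :
    |hiter U k g (k-(j+1)) (greedy T U g k B0 (j+1)) i
      - hiter U k g (k-j) (greedy T U g k B0 j) i| ≤ c := by
  set a := greedy T U g k B0 j with ha
  have e : k - (j+1) = k - j - 1 := by omega
  have hre : hiter U k g (k-j) a i
      = ulim U (fun n => hiter U k g (k-j-1) (Function.update a j n) i) := hit_rewrite hj a i
  have hspec := ulim_spec U (exists_ulim_int_bdd U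
    (fun n => (hM (k-j-1) (by omega) _).1 i) (fun n => (hM (k-j-1) (by omega) _).2.1 i)
    (f := fun n => hiter U k g (k-j-1) (Function.update a j n) i))
  obtain ⟨n0, hn0⟩ := Filter.nonempty_of_mem hspec
  have hn0 : hiter U k g (k-j-1) (Function.update a j n0) i
      = ulim U (fun n => hiter U k g (k-j-1) (Function.update a j n) i) := hn0
  have hval : hiter U k g (k-j) a i = hiter U k g (k-j-1) (Function.update a j n0) i := by
    rw [hre, hn0]
  show |hiter U k g (k-(j+1)) (Function.update a j (pickF T U g k B0 j a)) i - _| ≤ c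
  rw [e, hval]
  exact (hM (k-j-1) (by omega) _).2.2.2.1 _ j (by
    intro t ht
    rw [Function.update_of_ne ht, Function.update_of_ne ht]) i

lemma greedy_zero_off (hM : ∀ d, d ≤ k → Master T U g M c k d) (B0 : ℕ) {j : ℕ} (hj : j < k) {t : ℕ} (ht : t ≤ j) {i : ℕ}
    (hi : i ∉ Fst T U g k j (greedy T U g k B0 j)) :
    hiter U k g (k-t) (greedy T U g k B0 t) i = 0 := by
  have heq : hiter U k g (k-t) (greedy T U g k B0 t)
      = hiter U k g (k-t) (greedy T U g k B0 j) := by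
    apply (hM (k-t) (by omega) _).2.2.2.2
    intro t' ht'
    have : t' < t := by omega
    exact (greedy_stable B0 t j ht t' this).symm
  rw [heq]
  by_contra hne
  apply hi
  have hspec := nodeOf_spec (T := T) ((hM (k-t) (by omega) (greedy T U g k B0 j)).2.2.1)
  have := hspec.2 i hne
  exact Finset.mem_biUnion.mpr ⟨t, Finset.mem_range.mpr (by omega), List.mem_toFinset.mpr this⟩

lemma greedy_F_mono (hM : ∀ d, d ≤ k → Master T U g M c k d) (B0 : ℕ) {j j' : ℕ} (hjj : j ≤ j') :
    Fst T U g k j (greedy T U g k B0 j) ⊆ Fst T U g k j' (greedy T U g k B0 j') := by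
  intro i hi
  obtain ⟨t, htr, hit⟩ := Finset.mem_biUnion.mp hi
  have htj : t ≤ j := by simpa using Nat.lt_succ_iff.mp (Finset.mem_range.mp htr)
  have heq : hiter U k g (k-t) (greedy T U g k B0 j)
      = hiter U k g (k-t) (greedy T U g k B0 j') := by
    apply (hM (k-t) (by omega) _).2.2.2.2
    intro t' ht'
    have h1 : t' < t := by omega
    rw [greedy_stable B0 t j htj t' h1, greedy_stable B0 t j' (le_trans htj hjj) t' h1]
  refine Finset.mem_biUnion.mpr ⟨t, Finset.mem_range.mpr (by omega), ?_⟩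
  rwa [← heq]

lemma greedy_close (hU : (U : Filter ℕ) ≤ cofinite)
    (hM : ∀ d, d ≤ k → Master T U g M c k d) (B0 : ℕ) (hk : 1 ≤ k) (hc : 0 ≤ c) (i : ℕ) :
    |g (greedy T U g k B0 k) i - hiter U k g k (fun _ => 0) i| ≤ c := by
  classical
  set v : ℕ → ℝ := fun t => hiter U k g (k-t) (greedy T U g k B0 t) i with hv
  have hv0 : hiter U k g k (fun _ => 0) i = v 0 := by
    simp only [hv, Nat.sub_zero]
    rfl
  have hvk : g (greedy T U g k B0 k) i = v k := by
    simp only [hv, Nat.sub_self]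
    rfl
  rw [hvk, hv0]
  by_cases hex : ∃ j, j < k ∧ i ∈ Fst T U g k j (greedy T U g k B0 j)
  · set j0 := Nat.find hex with hj0
    obtain ⟨hj0k, hj0mem⟩ := Nat.find_spec hex
    have hmin : ∀ j < j0, i ∉ Fst T U g k j (greedy T U g k B0 j) := by
      intro j hj
      have := Nat.find_min hex hj
      intro hcon
      exact this ⟨by omega, hcon⟩
    -- agreement from j0 up to k
    have hagree : ∀ m, j0 ≤ m → m ≤ k → v m = v j0 := by
      intro m hm
      induction m, hm using Nat.le_induction with
      | base => intro _; rfl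
      | succ m hm ih =>
        intro hmk
        have hmk' : m < k := by omega
        have hiF : i ∈ Fst T U g k m (greedy T U g k B0 m) :=
          greedy_F_mono hM B0 hm hj0mem
        have := (pick_spec hU hM B0 hmk').2 i hiF
        have hstep : v (m+1) = v m := by
          show hiter U k g (k-(m+1)) (greedy T U g k B0 (m+1)) i = _
          have e : k - (m+1) = k - m - 1 := by omega
          rw [e]
          exact this
        rw [hstep]
        exact ih (by omega)
    have hvkj0 : v k = v j0 := hagree k hj0k.le le_rfl
    rw [hvkj0]
    rcases Nat.eq_zero_or_pos j0 with h0 | hpos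
    · rw [h0, sub_self, abs_zero]; exact hc
    · have hj1 : j0 - 1 < k := by omega
      have hnot : i ∉ Fst T U g k (j0-1) (greedy T U g k B0 (j0-1)) := hmin (j0-1) (by omega)
      have hz1 : v (j0-1) = 0 := greedy_zero_off hM B0 hj1 le_rfl hnot
      have hz0 : v 0 = 0 := greedy_zero_off hM B0 hj1 (by omega) hnot
      rw [hz0, sub_zero]
      have hstep := greedy_step_bound hU hM B0 hj1 i
      have e : j0 - 1 + 1 = j0 := by omega
      rw [e] at hstep
      calc |v j0| = |v j0 - v (j0-1)| := by rw [hz1, sub_zero]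
        _ ≤ c := hstep
  · push_neg at hex
    have hk1 : k - 1 < k := by omega
    have hnot : i ∉ Fst T U g k (k-1) (greedy T U g k B0 (k-1)) := hex (k-1) hk1
    have hz1 : v (k-1) = 0 := greedy_zero_off hM B0 hk1 le_rfl hnot
    have hz0 : v 0 = 0 := greedy_zero_off hM B0 hk1 (by omega) hnot
    rw [hz0, sub_zero]
    have hstep := greedy_step_bound hU hM B0 hk1 i
    have e : k - 1 + 1 = k := by omega
    rw [e] at hstep
    calc |v k| = |v k - v (k-1)| := by rw [hz1, sub_zero]
      _ ≤ c := hstep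

theorem concentration (hU : (U : Filter ℕ) ≤ cofinite)
    (hM : ∀ d, d ≤ k → Master T U g M c k d) (hk : 1 ≤ k) (hc : 0 ≤ c) :
    ∃ q1 q2 : ℕ → ℕ, ∃ m : ℕ, (∀ t < k, q1 t < m) ∧ (∀ t < k, m ≤ q2 t) ∧
      ∀ i, |g q1 i - g q2 i| ≤ 2*c := by
  set q1 := greedy T U g k 0 k with hq1
  set m := (Finset.range k).sup q1 + 1 with hm
  set q2 := greedy T U g k m k with hq2
  refine ⟨q1, q2, m, ?_, ?_, ?_⟩
  · intro t ht
    have : q1 t ≤ (Finset.range k).sup q1 :=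
      Finset.le_sup (Finset.mem_range.mpr ht)
    omega
  · intro t ht
    have h1 : q2 t = greedy T U g k m (t+1) t := greedy_stable m (t+1) k (by omega) t (by omega)
    have h2 : greedy T U g k m (t+1) t
        = pickF T U g k m t (greedy T U g k m t) := by
      show Function.update (greedy T U g k m t) t _ t = _
      rw [Function.update_self]
    rw [h1, h2]
    exact (pick_spec hU hM m ht).1
  · intro i
    have hA := greedy_close hU hM 0 hk hc i
    have hB := greedy_close hU hM m hk hc i
    calc |g q1 i - g q2 i|
        = |(g q1 i - hiter U k g k (fun _ => 0) i)
            - (g q2 i - hiter U k g k (fun _ => 0) i)| := by ring_nf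
      _ ≤ |g q1 i - hiter U k g k (fun _ => 0) i|
            + |g q2 i - hiter U k g k (fun _ => 0) i| := abs_sub _ _
      _ ≤ c + c := add_le_add hA hB
      _ = 2*c := by ring

end Greedy


/-- If `T` is a well-founded increasing tree on ℕ, then there is no coarse embedding from
`c₀` into the metric space `T(ℤ)` (with the sup metric). -/
theorem no_coarse_embedding_c0_into_treeZ
    (T : Set (List ℕ))
    (hclosed : ∀ l ∈ T, ∀ l' : List ℕ, l' <+: l → l' ∈ T)
    (hinc : ∀ l ∈ T, l.Chain' (· < ·))
    (hwf : ¬ ∃ x : ℕ → ℕ, ∀ n : ℕ, (List.ofFn fun i : Fin n => x i) ∈ T) :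
    ¬ ∃ φ : czero → treeZ T, CoarseEmbeddingOn φ := by
  rintro ⟨φ, ρ, ω, hρm, hωm, hρt, hpair⟩
  classical
  set U : Ultrafilter ℕ := Filter.hyperfilter ℕ with hUdef
  have hU : (U : Filter ℕ) ≤ cofinite := Filter.hyperfilter_le_cofinite
  set c := ω 1 with hcdef
  have hc : 0 ≤ c := by
    have h2 := (hpair 0 0).2
    rw [dist_self, dist_self] at h2
    exact le_trans h2 (hωm zero_le_one)
  obtain ⟨K, hK⟩ := Filter.eventually_atTop.mp (Filter.Tendsto.eventually_ge_atTop hρt (2*c+1))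
  set k := max 1 ⌈K⌉₊ with hkdef
  have hk1 : 1 ≤ k := le_max_left _ _
  have hkK : K ≤ (k : ℝ) := by
    calc K ≤ (⌈K⌉₊ : ℝ) := Nat.le_ceil K
      _ ≤ (k : ℝ) := by exact_mod_cast Nat.cast_le.mpr (le_max_right 1 ⌈K⌉₊)
  set g : (ℕ → ℕ) → ℕ → ℝ := fun a i => ((φ (cfg k a) : czero) i) with hgdef
  set a0 : ℕ → ℕ := fun _ => 0 with ha0
  set M : ℝ := ω k + ‖((φ (cfg k a0) : czero)).toBCF‖ with hMdef
  -- the hypotheses of the master lemma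
  have hg1 : ∀ a i, ∃ z : ℤ, g a i = (z : ℝ) := fun a i => (φ (cfg k a)).property.1 i
  have hg3 : ∀ a, ∃ l ∈ T, ∀ i, g a i ≠ 0 → i ∈ l := fun a => (φ (cfg k a)).property.2
  have hg2 : ∀ a i, |g a i| ≤ M := by
    intro a i
    have h1 : |g a i - g a0 i| ≤ dist ((φ (cfg k a)) : czero) ((φ (cfg k a0)) : czero) :=
      czero_coord_le_dist _ _ i
    have h2 : dist ((φ (cfg k a)) : czero) ((φ (cfg k a0)) : czero)
        = dist (φ (cfg k a)) (φ (cfg k a0)) := (Subtype.dist_eq _ _).symm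
    have h3 : dist (φ (cfg k a)) (φ (cfg k a0)) ≤ ω (dist (cfg k a) (cfg k a0)) :=
      (hpair _ _).2
    have h4 : ω (dist (cfg k a) (cfg k a0)) ≤ ω k := hωm (cfg_dist_le_k k a a0)
    have h5 : |g a0 i| ≤ ‖((φ (cfg k a0) : czero)).toBCF‖ := by
      have := BoundedContinuousFunction.norm_coe_le_norm ((φ (cfg k a0) : czero)).toBCF i
      simpa using this
    calc |g a i| ≤ |g a i - g a0 i| + |g a0 i| := by
          have := abs_sub_abs_le_abs_sub (g a i) (g a0 i)
          have h := abs_add_le (g a i - g a0 i) (g a0 i)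
          calc |g a i| = |(g a i - g a0 i) + g a0 i| := by ring_nf
            _ ≤ |g a i - g a0 i| + |g a0 i| := abs_add_le _ _
      _ ≤ M := by rw [hMdef]; rw [h2] at h1; linarith
  have hgLip : ∀ a b : ℕ → ℕ, ∀ s : ℕ, (∀ t, t ≠ s → a t = b t) →
      ∀ i, |g a i - g b i| ≤ c := by
    intro a b s hab i
    have h1 : |g a i - g b i| ≤ dist ((φ (cfg k a)) : czero) ((φ (cfg k b)) : czero) :=
      czero_coord_le_dist _ _ i
    have h2 : dist ((φ (cfg k a)) : czero) ((φ (cfg k b)) : czero)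
        = dist (φ (cfg k a)) (φ (cfg k b)) := (Subtype.dist_eq _ _).symm
    have h3 : dist (φ (cfg k a)) (φ (cfg k b)) ≤ ω (dist (cfg k a) (cfg k b)) := (hpair _ _).2
    have h4 : ω (dist (cfg k a) (cfg k b)) ≤ ω 1 := hωm (cfg_dist_le_one k a b s hab)
    rw [h2] at h1
    calc |g a i - g b i| ≤ ω (dist (cfg k a) (cfg k b)) := le_trans h1 h3
      _ ≤ c := h4
  have hgdep : ∀ a b : ℕ → ℕ, (∀ t, t < k → a t = b t) → g a = g b := by
    intro a b hab
    have hcfg : cfg k a = cfg k b := by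
      apply DFunLike.ext
      intro i
      have hfil : Finset.filter (fun j : Fin k => i ≤ a j) Finset.univ
          = Finset.filter (fun j : Fin k => i ≤ b j) Finset.univ := by
        apply Finset.filter_congr
        intro j _
        rw [hab j j.isLt]
      rw [cfg_apply, cfg_apply, hfil]
    funext i
    rw [hgdef]
    simp only [hcfg]
  have hM : ∀ d, d ≤ k → Master T U g M c k d :=
    master_holds T U g M c k hclosed hinc hwf hU hg1 hg2 hg3 hgLip hgdep
  obtain ⟨q1, q2, m, hq1m, hq2m, hclose⟩ := concentration hU hM hk1 hc
  have hdist_ge : (k : ℝ) ≤ dist (cfg k q1) (cfg k q2) := cfg_dist_ge k q1 q2 m hq1m hq2m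
  have h1 : 2*c+1 ≤ ρ (k : ℝ) := hK (k : ℝ) hkK
  have h2 : ρ (k : ℝ) ≤ ρ (dist (cfg k q1) (cfg k q2)) := hρm hdist_ge
  have h3 : ρ (dist (cfg k q1) (cfg k q2)) ≤ dist (φ (cfg k q1)) (φ (cfg k q2)) :=
    (hpair _ _).1
  have h4 : dist (φ (cfg k q1)) (φ (cfg k q2)) ≤ 2*c := by
    rw [Subtype.dist_eq]
    apply czero_dist_le (by linarith) _ _
    intro i
    exact hclose i
  linarith
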